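/- For every integer n ≥ 1 and every real number x with |x| < 1, the n-th derivative of the inverse hyperbolic tangent function satisfies (as an identity of complex numbers, after casting the real left-hand side to ℂ) Dₓⁿ arctanh(x) = ((-1)^{n+1} (n-1)! · i^{n-1} / (√(1-x²))^{n+1}) · U_{n-1}(i·x / √(1-x²)), where U_{n-1} is the (n−1)-st Chebyshev polynomial of the second kind over ℂ evaluated at i·x/√(1-x²). -/

import Mathlib

open Complex in
/-- The real inverse hyperbolic tangent function, `arctanh x = (1/2) ln((1+x)/(1-x))`. -/
noncomputable def arctanh (x : ℝ) : ℝ := (1 / 2) * Real.log ((1 + x) / (1 - x))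

/-!
On `(-1, 1)` the derivative of `arctanh` is `(p - q) / 2` with `p = (1 - x)⁻¹`, `q = (-1 - x)⁻¹`,
and `d/dx (a - x)⁻¹ ^ k = k (a - x)⁻¹ ^ (k + 1)`, so `Dₓⁿ arctanh = (n-1)!/2 (pⁿ - qⁿ)`.
On the other side, `(p - q) rᵐ Uₘ(z) = p^(m+1) - q^(m+1)` as soon as `2 r z = p + q` and `p q = r²`,
because both sides satisfy the three-term recurrence of `Uₘ`. For `s = √(1 - x²)` the choice
`r = -i/s`, `z = i x/s` meets these conditions, and then `p - q = 2/s²`.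
-/

open Set Nat Polynomial Complex

theorem chebyshevU_eval_mul_pow {R : Type*} [CommRing R] {p q r z : R}
    (hz : 2 * r * z = p + q) (hr : p * q = r ^ 2) (m : ℕ) :
    (p - q) * r ^ m * (Chebyshev.U R m).eval z = p ^ (m + 1) - q ^ (m + 1) := by
  induction m using Nat.twoStepInduction with
  | zero => simp
  | one =>
    simp only [pow_one, cast_one, Chebyshev.U_one, eval_mul, eval_ofNat, eval_X]
    linear_combination (p - q) * hz
  | more m ih₀ ih₁ =>
    push_cast at ih₁ ⊢
    rw [Chebyshev.U_add_two]
    simp only [eval_sub, eval_mul, eval_ofNat, eval_X]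
    linear_combination (p - q) * r ^ (m + 1) * (Chebyshev.U R (m + 1)).eval z * hz
      + (p + q) * ih₁ - r ^ 2 * ih₀ + (p ^ (m + 1) - q ^ (m + 1)) * hr

theorem neg_I_div_pow_mul_chebyshevU_eval {x s : ℂ} (hs : s ^ 2 = 1 - x ^ 2) (hs₀ : s ≠ 0)
    (m : ℕ) :
    (-I / s) ^ m * (Chebyshev.U ℂ m).eval (I * x / s) =
      s ^ 2 / 2 * ((1 - x)⁻¹ ^ (m + 1) - (-1 - x)⁻¹ ^ (m + 1)) := by
  have hs₂ : s ^ 2 ≠ 0 := pow_ne_zero 2 hs₀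
  have h₁ : 1 - x ≠ 0 := fun h => hs₂ (by rw [hs]; linear_combination (1 + x) * h)
  have h₂ : -1 - x ≠ 0 := fun h => hs₂ (by rw [hs]; linear_combination (x - 1) * h)
  have hpq : (1 - x)⁻¹ - (-1 - x)⁻¹ = 2 / s ^ 2 := by
    field_simp
    linear_combination -2 * hs
  have hz : 2 * (-I / s) * (I * x / s) = (1 - x)⁻¹ + (-1 - x)⁻¹ := by
    rw [show 2 * (-I / s) * (I * x / s) = -2 * I ^ 2 * x / s ^ 2 by ring, I_sq]
    field_simp
    linear_combination 2 * x * hs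
  have hr : (1 - x)⁻¹ * (-1 - x)⁻¹ = (-I / s) ^ 2 := by
    rw [div_pow, neg_sq, I_sq]
    field_simp
    linear_combination hs
  rw [← chebyshevU_eval_mul_pow hz hr m, hpq]
  field_simp

theorem iteratedDeriv_inv_const_sub {𝕜 : Type*} [NontriviallyNormedField 𝕜] (m : ℕ) (a x : 𝕜) :
    iteratedDeriv m (fun y => (a - y)⁻¹) x = m ! * (a - x)⁻¹ ^ (m + 1) := by
  have h := congr_fun (iter_deriv_inv_linear m (-1 : 𝕜) a) x
  simp only [neg_one_mul, neg_add_eq_sub] at h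
  have hsign : (-1 : 𝕜) ^ m * (-1) ^ m = 1 := by rw [← mul_pow]; norm_num
  rw [iteratedDeriv_eq_iterate, h, show (-1 - m : ℤ) = -((m + 1 : ℕ) : ℤ) by push_cast; ring,
    zpow_neg, zpow_natCast, ← inv_pow]
  linear_combination (m ! * (a - x)⁻¹ ^ (m + 1)) * hsign

theorem hasDerivAt_arctanh {x : ℝ} (hx : x ∈ Ioo (-1) 1) :
    HasDerivAt arctanh (((1 - x)⁻¹ - (-1 - x)⁻¹) / 2) x := by
  have h₁ : 1 + x ≠ 0 := by linarith [hx.1]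
  have h₂ : 1 - x ≠ 0 := by linarith [hx.2]
  have hquot := ((hasDerivAt_id' x).const_add 1).div ((hasDerivAt_id' x).const_sub 1) h₂
  refine ((hquot.log (div_ne_zero h₁ h₂)).const_mul (1 / 2)).congr_deriv ?_
  rw [Pi.div_apply, ← neg_add', inv_neg]
  field_simp
  ring

theorem iteratedDeriv_succ_arctanh (m : ℕ) {x : ℝ} (hx : x ∈ Ioo (-1) 1) :
    iteratedDeriv (m + 1) arctanh x =
      m ! / 2 * ((1 - x)⁻¹ ^ (m + 1) - (-1 - x)⁻¹ ^ (m + 1)) := by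
  have h₁ : -1 - x ≠ 0 := by linarith [hx.1]
  have h₂ : 1 - x ≠ 0 := by linarith [hx.2]
  have hderiv : deriv arctanh =ᶠ[nhds x] fun y => ((1 - y)⁻¹ - (-1 - y)⁻¹) / 2 :=
    Filter.eventually_of_mem (isOpen_Ioo.mem_nhds hx) fun y hy => (hasDerivAt_arctanh hy).deriv
  rw [iteratedDeriv_succ', hderiv.iteratedDeriv_eq, iteratedDeriv_div_const,
    iteratedDeriv_fun_sub (by fun_prop (disch := assumption)) (by fun_prop (disch := assumption)),
    iteratedDeriv_inv_const_sub, iteratedDeriv_inv_const_sub]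
  ring

open Complex in
/-- For every integer `n ≥ 1` and every real `x` with `|x| < 1`, as complex numbers,
`Dₓⁿ arctanh(x) = ((-1)^(n+1) (n-1)! i^(n-1) / (√(1-x²))^(n+1)) · U_{n-1}(i x/√(1-x²))`. -/
theorem iteratedDeriv_arctanh_eq_chebyshevU (n : ℕ) (hn : 1 ≤ n) (x : ℝ) (hx : |x| < 1) :
    ((iteratedDeriv n arctanh x : ℝ) : ℂ) =
      ((-1) ^ (n + 1) * (Nat.factorial (n - 1) : ℂ) * I ^ (n - 1) /
          ((Real.sqrt (1 - x ^ 2) : ℝ) : ℂ) ^ (n + 1)) *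
        (Polynomial.Chebyshev.U ℂ ((n : ℤ) - 1)).eval
          (I * (x : ℂ) / ((Real.sqrt (1 - x ^ 2) : ℝ) : ℂ)) := by
  obtain ⟨m, rfl⟩ : ∃ m, n = m + 1 := ⟨n - 1, by omega⟩
  have hx' : x ∈ Ioo (-1) 1 := abs_lt.1 hx
  have hx₂ : 0 < 1 - x ^ 2 := by nlinarith [hx'.1, hx'.2]
  have hs : ((√(1 - x ^ 2) : ℝ) : ℂ) ^ 2 = 1 - x ^ 2 := by norm_cast; exact Real.sq_sqrt hx₂.le
  have hs₀ : ((√(1 - x ^ 2) : ℝ) : ℂ) ≠ 0 := ofReal_ne_zero.2 (Real.sqrt_pos.2 hx₂).ne'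
  rw [iteratedDeriv_succ_arctanh m hx', show ((m + 1 : ℕ) : ℤ) - 1 = m by push_cast; ring,
    Nat.add_sub_cancel]
  push_cast
  generalize ((√(1 - x ^ 2) : ℝ) : ℂ) = s at hs hs₀ ⊢
  have hprefactor : (-1) ^ (m + 1 + 1) * (m ! : ℂ) * I ^ m / s ^ (m + 1 + 1) =
      m ! / s ^ 2 * (-I / s) ^ m := by
    rw [div_pow, neg_pow]
    field_simp
    ring
  rw [hprefactor, mul_assoc, neg_I_div_pow_mul_chebyshevU_eval hs hs₀]
  field_simp
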